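/- In one dimension, the generator L acting on smooth functions f of x by (Lf)(x) = −(1/τ)(x²+x)f'(x) + ((A+2B)/2)f''(x), with τ > 0 and A+2B > 0, annihilates in the adjoint sense the density η(x) = Z^{-1} e^{−(2x³/3 + x²)/(τ(A+2B))} ∫_{−∞}^x e^{(2x'³/3 + x'²)/(τ(A+2B))} dx'; i.e. (L†η)(x) = (1/τ)d/dx[(x²+x)η(x)] + ((A+2B)/2)η''(x) = 0 for all x ∈ ℝ. -/

import Mathlib

/-!
With `Φ(x) = 2x³/3 + x²` (so `Φ' = 2(x² + x)`) and `c = τ(A + 2B) > 0`, the integral converges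
since `Φ → -∞` cubically at `-∞`, and the product rule gives `η' = Z⁻¹ - (2/c)(x² + x)η`:
the probability flux `(x² + x)η + (c/2)η'` is constant. Differentiating once more,
`(c/2)η'' = -((x² + x)η)'`, which is `L†η = 0` after dividing by `τ`.
-/

open MeasureTheory

/-- The invariant density `η(x)` of the projectivized 1d dispersion,
up to the normalization constant `Z`. -/
noncomputable def invDensity (c Z : ℝ) (x : ℝ) : ℝ :=
  Z⁻¹ * Real.exp (-(2 * x ^ 3 / 3 + x ^ 2) / c) *
    ∫ t in Set.Iic x, Real.exp ((2 * t ^ 3 / 3 + t ^ 2) / c)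

open Real Set

theorem hasDerivAt_integral_Iic {E : Type*} [NormedAddCommGroup E] [NormedSpace ℝ E]
    [CompleteSpace E] {g : ℝ → E} (hg : Continuous g) (hint : ∀ y, IntegrableOn g (Iic y))
    (x : ℝ) : HasDerivAt (fun y => ∫ t in Iic y, g t) (g x) x := by
  have split : ∀ y, ∫ t in Iic y, g t = (∫ t in Iic x, g t) + ∫ t in x..y, g t := fun y => by
    rw [← intervalIntegral.integral_Iic_sub_Iic (hint x) (hint y), add_sub_cancel]
  rw [funext split]
  exact (intervalIntegral.integral_hasDerivAt_right (hg.intervalIntegrable x x)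
    (hg.stronglyMeasurableAtFilter _ _) hg.continuousAt).const_add _

theorem integrableOn_Iic_exp_of_le_self {f : ℝ → ℝ} (hf : Continuous f) {M : ℝ}
    (hM : ∀ t ≤ M, f t ≤ t) (x : ℝ) : IntegrableOn (fun t => exp (f t)) (Iic x) := by
  have tail : IntegrableOn (fun t => exp (f t)) (Iic M) := by
    refine (integrableOn_exp_Iic M).mono' hf.rexp.aestronglyMeasurable.restrict ?_
    filter_upwards [ae_restrict_mem measurableSet_Iic] with t ht
    rw [norm_of_nonneg (exp_pos _).le]
    exact exp_le_exp.mpr (hM t ht)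
  refine (tail.union (hf.rexp.integrableOn_Icc (a := M) (b := x))).mono_set fun t ht => ?_
  rcases le_or_gt t M with h | h
  · exact Or.inl h
  · exact Or.inr ⟨h.le, ht⟩

theorem integrableOn_Iic_exp_cubic_div {c : ℝ} (hc : 0 < c) (x : ℝ) :
    IntegrableOn (fun t => exp ((2 * t ^ 3 / 3 + t ^ 2) / c)) (Iic x) := by
  refine integrableOn_Iic_exp_of_le_self (by fun_prop) (M := min (-3) (-c)) (fun t ht => ?_) x
  have h3 : t ≤ -3 := ht.trans (min_le_left _ _)
  have hc' : t ≤ -c := ht.trans (min_le_right _ _)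
  rw [div_le_iff₀ hc]
  nlinarith [mul_nonneg (sq_nonneg t) (by linarith : (0:ℝ) ≤ -3 - t),
    mul_nonneg (by linarith : (0:ℝ) ≤ -t) (by linarith : (0:ℝ) ≤ -c - t)]

theorem hasDerivAt_exp_neg_mul_integral_Iic_exp {Φ φ : ℝ → ℝ} {c : ℝ}
    (hΦ : ∀ x, HasDerivAt Φ (φ x) x) (hint : ∀ x, IntegrableOn (fun t => exp (Φ t / c)) (Iic x))
    (x : ℝ) :
    HasDerivAt (fun y => exp (-Φ y / c) * ∫ t in Iic y, exp (Φ t / c))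
      (1 - φ x / c * (exp (-Φ x / c) * ∫ t in Iic x, exp (Φ t / c))) x := by
  have hcont : Continuous fun t => exp (Φ t / c) :=
    (continuous_iff_continuousAt.mpr fun t => (hΦ t).continuousAt).div_const c |>.rexp
  refine (((hΦ x).neg.div_const c).exp.mul (hasDerivAt_integral_Iic hcont hint x)).congr_deriv ?_
  rw [Pi.neg_apply, ← exp_add, show -Φ x / c + Φ x / c = 0 by ring, exp_zero]
  ring

theorem invDensity_hasDerivAt {c : ℝ} (hc : 0 < c) (Z x : ℝ) :
    HasDerivAt (invDensity c Z) (Z⁻¹ - 2 / c * ((x ^ 2 + x) * invDensity c Z x)) x := by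
  have hΦ : ∀ y : ℝ, HasDerivAt (fun t => 2 * t ^ 3 / 3 + t ^ 2) (2 * (y ^ 2 + y)) y := fun y => by
    refine ((((hasDerivAt_pow 3 y).const_mul 2).div_const 3).add
      (hasDerivAt_pow 2 y)).congr_deriv ?_
    push_cast; ring
  have h := (hasDerivAt_exp_neg_mul_integral_Iic_exp hΦ
    (integrableOn_Iic_exp_cubic_div hc) x).const_mul Z⁻¹
  simp only [← mul_assoc] at h
  refine h.congr_deriv ?_
  simp only [invDensity]
  ring

theorem stationary_fokker_planck_general (τ A B Z : ℝ) (hτ : 0 < τ)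
    (hAB : 0 < A + 2 * B) (c : ℝ) (hc : c = τ * (A + 2 * B)) :
    ∀ x : ℝ,
      (1 / τ) * deriv (fun x' => (x' ^ 2 + x') * invDensity c Z x') x
        + (A + 2 * B) / 2 * deriv (deriv (invDensity c Z)) x = 0 := by
  intro x
  have hc0 : 0 < c := hc ▸ mul_pos hτ hAB
  have hflux :
      deriv (invDensity c Z) = fun y => Z⁻¹ - 2 / c * ((y ^ 2 + y) * invDensity c Z y) :=
    funext fun y => (invDensity_hasDerivAt hc0 Z y).deriv
  have hdiff : DifferentiableAt ℝ (fun y => (y ^ 2 + y) * invDensity c Z y) x :=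
    (by fun_prop : DifferentiableAt ℝ (fun y : ℝ => y ^ 2 + y) x).mul
      (invDensity_hasDerivAt hc0 Z x).differentiableAt
  rw [hflux, deriv_const_sub, deriv_const_mul _ hdiff, hc]
  field_simp
  ring

/-- `η` solves the stationary Fokker–Planck equation
`L†η = (1/τ) d/dx[(x²+x)η] + ((A+2B)/2) η'' = 0`. -/
theorem stationary_fokker_planck (τ A B Z : ℝ) (hτ : 0 < τ)
    (hAB : 0 < A + 2 * B) (hZ : 0 < Z) (c : ℝ) (hc : c = τ * (A + 2 * B)) :
    ∀ x : ℝ,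
      (1 / τ) * deriv (fun x' => (x' ^ 2 + x') * invDensity c Z x') x
        + (A + 2 * B) / 2 * deriv (deriv (invDensity c Z)) x = 0 :=
  stationary_fokker_planck_general τ A B Z hτ hAB c hc
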